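/- Let G be a finite simple graph and let u be a vertex of G. Then the sum, over all triangles T of G, of the quantity T_u(G) − T_u(G − T) equals Σ_{x ∈ N_u} Y_{u,x}(G)^2 − T_u(G) + (1/2) Σ_{x ∈ N_u} R_{x,u}(G). -/

import Mathlib

/-!
`T_u(G) − T_u(G − T)` counts the edges `xy` of `N_u` destroyed by `T`: those of `T` itself and,
when `u ∈ T`, those at the two other vertices of `T`, which leave `N_u`. Counting ordered pairs
`(x, y)` and exchanging the sums, such a pair is destroyed by `Y_{x,y} + Y_{u,x} + Y_{u,y} − 2`
triangles. Summed over the pairs, `Σ Y_{x,y} = Σ_x R_{x,u} + 2 T_u` (the common neighbour `u` is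
the only one not counted by `R_{x,u}`), while each of the other two sums is `Σ_x Y_{u,x}²`.
-/

open Finset
open scoped Classical

variable {V : Type*} [Fintype V] [DecidableEq V]

/-- The neighborhood of `u` in `G`, as a finset. -/
noncomputable def nbr (G : SimpleGraph V) (u : V) : Finset V :=
  Finset.univ.filter fun x => G.Adj u x

/-- The co-degree `Y_{u,v}` of `u` and `v`. -/
noncomputable def codeg (G : SimpleGraph V) (u v : V) : ℕ :=
  (nbr G u ∩ nbr G v).card

/-- The triple co-degree `Y_{u,v,w}`. -/
noncomputable def codeg3 (G : SimpleGraph V) (u v w : V) : ℕ :=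
  (nbr G u ∩ nbr G v ∩ nbr G w).card

/-- The number of triangles `Q(G)`. -/
noncomputable def triCount (G : SimpleGraph V) : ℕ :=
  (G.cliqueFinset 3).card

/-- The graph `G − T` obtained by deleting the edges of a triangle `t = {a,b,c}`. -/
noncomputable def removeTri (G : SimpleGraph V) (t : Finset V) : SimpleGraph V :=
  G.deleteEdges ↑(t.sym2)

/-- `T_u(G)`: the number of edges of `G` with both endpoints in `N_u`. -/
noncomputable def tEdges (G : SimpleGraph V) (u : V) : ℕ :=
  (G.edgeFinset.filter fun e => ∀ x ∈ e, x ∈ nbr G u).card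

/-- `R_{u,v}`: the number of ordered pairs `(x,y)` with `xy ∈ E(G)`, `x ∈ N_{u,v}`,
`y ∈ N_u`, `y ≠ v`. -/
noncomputable def Rpairs (G : SimpleGraph V) (u v : V) : ℕ :=
  (((nbr G u ∩ nbr G v) ×ˢ ((nbr G u).erase v)).filter fun p => G.Adj p.1 p.2).card

/-- The co-degree as a function on unordered pairs. -/
noncomputable def codegE (G : SimpleGraph V) : Sym2 V → ℕ :=
  Sym2.lift ⟨fun x y => codeg G x y, fun x y => by
    simp only [codeg, Finset.inter_comm]⟩

section

variable {G : SimpleGraph V}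

omit [DecidableEq V] in
lemma mem_nbr {u x : V} : x ∈ nbr G u ↔ G.Adj u x := by
  simp [nbr]

omit [Fintype V] [DecidableEq V] in
lemma removeTri_adj {t : Finset V} {x y : V} :
    (removeTri G t).Adj x y ↔ G.Adj x y ∧ ¬(x ∈ t ∧ y ∈ t) := by
  simp [removeTri]

noncomputable def adjPairs (G : SimpleGraph V) (s : Finset V) : Finset (V × V) :=
  (s ×ˢ s).filter fun p => G.Adj p.1 p.2

omit [Fintype V] [DecidableEq V] in
lemma mem_adjPairs {s : Finset V} {p : V × V} :
    p ∈ adjPairs G s ↔ p.1 ∈ s ∧ p.2 ∈ s ∧ G.Adj p.1 p.2 := by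
  simp [adjPairs, and_assoc]

lemma two_mul_card_edgeFinset_filter_forall_mem (s : Finset V) :
    2 * #(G.edgeFinset.filter fun e => ∀ x ∈ e, x ∈ s) = #(adjPairs G s) := by
  let H : SimpleGraph V :=
    { Adj x y := G.Adj x y ∧ x ∈ s ∧ y ∈ s
      symm := ⟨fun _ _ ⟨h, hx, hy⟩ => ⟨h.symm, hy, hx⟩⟩
      loopless := ⟨fun x h => G.loopless.irrefl x h.1⟩ }
  have hedges : H.edgeFinset = G.edgeFinset.filter fun e => ∀ x ∈ e, x ∈ s := by
    ext e
    induction e using Sym2.ind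
    simp [H]
  rw [← hedges, SimpleGraph.two_mul_card_edgeFinset]
  congr 1
  ext p
  simp only [mem_filter, mem_univ, true_and, mem_adjPairs, H]
  tauto

lemma two_mul_tEdges (u : V) : 2 * tEdges G u = #(adjPairs G (nbr G u)) :=
  two_mul_card_edgeFinset_filter_forall_mem _

/-- The edge `p` of `N_u` is lost in `G − t`: either it is an edge of `t`, or `ux` is an edge of
`t` for an endpoint `x` of `p`, which then leaves `N_u`. -/
def Destroys (u : V) (t : Finset V) (p : V × V) : Prop :=
  (p.1 ∈ t ∧ p.2 ∈ t) ∨ (u ∈ t ∧ (p.1 ∈ t ∨ p.2 ∈ t))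

lemma adjPairs_nbr_removeTri (u : V) (t : Finset V) :
    adjPairs (removeTri G t) (nbr (removeTri G t) u) =
      (adjPairs G (nbr G u)).filter fun p => ¬Destroys u t p := by
  ext p
  rw [mem_filter]
  simp only [mem_adjPairs, mem_nbr, removeTri_adj, Destroys]
  tauto

lemma two_mul_tEdges_removeTri_add (u : V) (t : Finset V) :
    2 * tEdges (removeTri G t) u + #((adjPairs G (nbr G u)).filter (Destroys u t)) =
      2 * tEdges G u := by
  rw [two_mul_tEdges, two_mul_tEdges, adjPairs_nbr_removeTri, add_comm,
    card_filter_add_card_filter_not]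

lemma card_cliqueFinset_three_filter_mem_pair {a b : V} (hab : G.Adj a b) :
    #((G.cliqueFinset 3).filter fun t => a ∈ t ∧ b ∈ t) = codeg G a b := by
  symm
  refine card_bij (fun c _ => {a, b, c}) (fun c hc => ?_) (fun c hc c' hc' h => ?_) fun t ht => ?_
  · simp only [mem_inter, mem_nbr] at hc
    simp [SimpleGraph.is3Clique_triple_iff, hab, hc]
  · simp only [mem_inter, mem_nbr] at hc hc'
    have : c ∈ ({a, b, c'} : Finset V) := h ▸ by simp
    simp only [mem_insert, mem_singleton] at this
    grind [hc.1.ne, hc.2.ne]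
  · rw [mem_filter, SimpleGraph.mem_cliqueFinset_iff] at ht
    obtain ⟨ht, ha, hb⟩ := ht
    obtain ⟨c, hct, hcab⟩ := exists_mem_notMem_of_card_lt_card (s := {a, b}) (t := t)
      (by rw [ht.card_eq]; exact card_le_two.trans_lt (by norm_num))
    simp only [mem_insert, mem_singleton, not_or] at hcab
    have hac := ht.1 ha hct (Ne.symm hcab.1)
    have hbc := ht.1 hb hct (Ne.symm hcab.2)
    have habc : G.IsNClique 3 {a, b, c} := SimpleGraph.is3Clique_triple_iff.2 ⟨hab, hac, hbc⟩
    refine ⟨c, by simp [mem_nbr, hac, hbc], eq_of_subset_of_card_le ?_ ?_⟩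
    · simp [insert_subset_iff, ha, hb, hct]
    · rw [habc.card_eq, ht.card_eq]

lemma card_cliqueFinset_three_filter_mem_triple {a b c : V} (hab : G.Adj a b) (hac : G.Adj a c)
    (hbc : G.Adj b c) :
    #((G.cliqueFinset 3).filter fun t => a ∈ t ∧ b ∈ t ∧ c ∈ t) = 1 := by
  have habc : G.IsNClique 3 {a, b, c} := SimpleGraph.is3Clique_triple_iff.2 ⟨hab, hac, hbc⟩
  rw [card_eq_one]
  refine ⟨{a, b, c}, eq_singleton_iff_unique_mem.2 ⟨by simp [habc], fun t ht => ?_⟩⟩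
  simp only [mem_filter, SimpleGraph.mem_cliqueFinset_iff] at ht
  refine (eq_of_subset_of_card_le ?_ (by rw [habc.card_eq, ht.1.card_eq])).symm
  simp [insert_subset_iff, ht.2]

lemma card_filter_destroys_add_two {u x y : V} (hux : G.Adj u x) (huy : G.Adj u y)
    (hxy : G.Adj x y) :
    #((G.cliqueFinset 3).filter fun t => Destroys u t (x, y)) + 2 =
      codeg G x y + codeg G u x + codeg G u y := by
  rw [← card_cliqueFinset_three_filter_mem_pair hxy, ← card_cliqueFinset_three_filter_mem_pair hux,
    ← card_cliqueFinset_three_filter_mem_pair huy, ← mul_one 2,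
    ← card_cliqueFinset_three_filter_mem_triple hux huy hxy]
  -- inclusion–exclusion: only the triangle `{u, x, y}` lies in all three families
  simp only [card_filter, mul_sum, ← sum_add_distrib]
  refine sum_congr rfl fun t _ => ?_
  by_cases hu : u ∈ t <;> by_cases hx : x ∈ t <;> by_cases hy : y ∈ t <;> simp [Destroys, *]

lemma filter_adj_eq_inter_nbr (s : Finset V) (x : V) : s.filter (G.Adj x) = s ∩ nbr G x := by
  ext y
  simp [mem_nbr]

lemma sum_adjPairs {M : Type*} [AddCommMonoid M] (s : Finset V) (f : V × V → M) :
    ∑ p ∈ adjPairs G s, f p = ∑ x ∈ s, ∑ y ∈ s ∩ nbr G x, f (x, y) := by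
  rw [adjPairs, sum_filter, sum_product]
  refine sum_congr rfl fun x _ => ?_
  rw [← filter_adj_eq_inter_nbr, sum_filter]

omit [Fintype V] [DecidableEq V] in
lemma sum_adjPairs_swap {M : Type*} [AddCommMonoid M] (s : Finset V) (f : V × V → M) :
    ∑ p ∈ adjPairs G s, f p.swap = ∑ p ∈ adjPairs G s, f p := by
  have hswap : ∀ p ∈ adjPairs G s, p.swap ∈ adjPairs G s := fun p hp => by
    rw [mem_adjPairs] at hp ⊢
    exact ⟨hp.2.1, hp.1, hp.2.2.symm⟩
  exact sum_nbij' Prod.swap Prod.swap hswap hswap (fun p _ => p.swap_swap) (fun p _ => p.swap_swap)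
    fun _ _ => rfl

lemma sum_adjPairs_codeg_fst (u : V) :
    ∑ p ∈ adjPairs G (nbr G u), codeg G u p.1 = ∑ x ∈ nbr G u, codeg G u x ^ 2 := by
  rw [sum_adjPairs]
  refine sum_congr rfl fun x _ => ?_
  dsimp only
  rw [sum_const, smul_eq_mul, sq]
  rfl

lemma Rpairs_add_codeg {u x : V} (hux : G.Adj u x) :
    Rpairs G x u + codeg G x u = ∑ y ∈ nbr G x ∩ nbr G u, codeg G x y := by
  rw [Rpairs, card_filter, sum_product, codeg, card_eq_sum_ones, ← sum_add_distrib]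
  refine sum_congr rfl fun y hy => ?_
  have hu : u ∈ nbr G x ∩ nbr G y := by
    simp only [mem_inter, mem_nbr] at hy ⊢
    exact ⟨hux.symm, hy.2.symm⟩
  rw [← card_filter, filter_adj_eq_inter_nbr, erase_inter, card_erase_of_mem hu,
    Nat.sub_add_cancel (card_pos.2 ⟨u, hu⟩)]
  rfl

lemma sum_adjPairs_codeg (u : V) :
    ∑ p ∈ adjPairs G (nbr G u), codeg G p.1 p.2 =
      ∑ x ∈ nbr G u, Rpairs G x u + #(adjPairs G (nbr G u)) := by
  rw [card_eq_sum_ones, sum_adjPairs, sum_adjPairs, ← sum_add_distrib]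
  refine sum_congr rfl fun x hx => ?_
  rw [← card_eq_sum_ones, inter_comm, ← Rpairs_add_codeg (mem_nbr.1 hx), codeg, inter_comm]

lemma sum_card_filter_destroys_add_card (u : V) :
    ∑ p ∈ adjPairs G (nbr G u), #((G.cliqueFinset 3).filter fun t => Destroys u t p) +
        #(adjPairs G (nbr G u)) =
      ∑ x ∈ nbr G u, Rpairs G x u + 2 * ∑ x ∈ nbr G u, codeg G u x ^ 2 := by
  have hpair : ∀ p ∈ adjPairs G (nbr G u),
      #((G.cliqueFinset 3).filter fun t => Destroys u t p) + 2 =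
        codeg G p.1 p.2 + codeg G u p.1 + codeg G u p.2 := fun p hp => by
    simp only [mem_adjPairs, mem_nbr] at hp
    exact card_filter_destroys_add_two hp.1 hp.2.1 hp.2.2
  have hsnd : ∑ p ∈ adjPairs G (nbr G u), codeg G u p.2 = ∑ x ∈ nbr G u, codeg G u x ^ 2 := by
    rw [← sum_adjPairs_codeg_fst, ← sum_adjPairs_swap]
    rfl
  have hsum := sum_congr rfl hpair
  rw [sum_add_distrib, sum_add_distrib, sum_add_distrib, sum_const, smul_eq_mul,
    sum_adjPairs_codeg, sum_adjPairs_codeg_fst, hsnd] at hsum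
  omega

end

/-- the total decrease of `T_u` over all single-triangle removals equals
`Σ_{x ∈ N_u} Y_{u,x}² − T_u(G) + (1/2) Σ_{x ∈ N_u} R_{x,u}(G)`. -/
theorem tEdges_one_step_change (G : SimpleGraph V) (u : V) :
    (∑ t ∈ G.cliqueFinset 3, ((tEdges G u : ℝ) - tEdges (removeTri G t) u)) =
      (∑ x ∈ nbr G u, (codeg G u x : ℝ) ^ 2) - tEdges G u
        + (1 / 2) * ∑ x ∈ nbr G u, (Rpairs G x u : ℝ) := by
  set P := adjPairs G (nbr G u)
  have hstep (t : Finset V) :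
      (tEdges G u : ℝ) - tEdges (removeTri G t) u = #(P.filter (Destroys u t)) / 2 := by
    have h : (2 * tEdges (removeTri G t) u + #(P.filter (Destroys u t)) : ℝ) = 2 * tEdges G u := by
      exact_mod_cast two_mul_tEdges_removeTri_add u t
    linarith
  have hdouble : ∑ t ∈ G.cliqueFinset 3, #(P.filter (Destroys u t)) =
      ∑ p ∈ P, #((G.cliqueFinset 3).filter fun t => Destroys u t p) :=
    sum_card_bipartiteAbove_eq_sum_card_bipartiteBelow _
  have hcount := sum_card_filter_destroys_add_card (G := G) u
  rw [← hdouble, ← two_mul_tEdges] at hcount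
  apply_fun (Nat.cast : ℕ → ℝ) at hcount
  push_cast at hcount
  rw [sum_congr rfl fun t _ => hstep t, ← sum_div]
  linarith
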